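/- arXiv:1306.0281 — 4 statements merged into one kernel-verified Lean document; each statement's English description precedes it below -/
import Mathlib

section
/- Let k, n, q ≥ 1 be integers and ε > 0 be such that n ≥ k·log₂ q + 2·log₂(1/ε). If H is uniformly random in T_q^{k×n}, z is uniformly random in {0,1}^n, and u is uniformly random in T_q^k, then the statistical distance between the distribution of (H, H·z) and the distribution of (H, u) is at most ε. (Here H·z is computed modulo 1, i.e., in T_q^k.) -/
open Finset

lemma ker_count (k n q : ℕ) [NeZero q] (v : Fin n → ZMod q) (j₀ : Fin n)
    (hu : IsUnit (v j₀)) :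
    Nat.card {H : Matrix (Fin k) (Fin n) (ZMod q) // H.mulVec v = 0} * q ^ k = q ^ (k * n) := by
  classical
  let φ : Matrix (Fin k) (Fin n) (ZMod q) →+ (Fin k → ZMod q) :=
    { toFun := fun H => H.mulVec v
      map_zero' := by simp
      map_add' := fun a b => Matrix.add_mulVec a b v }
  have hsurj : Function.Surjective φ := by
    intro w
    refine ⟨Matrix.of fun i j => if j = j₀ then w i * (hu.unit⁻¹ : (ZMod q)ˣ) else 0, ?_⟩
    funext i
    show (Matrix.mulVec _ v) i = w i
    simp only [Matrix.mulVec, dotProduct, Matrix.of_apply, ite_mul, zero_mul]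
    rw [Finset.sum_ite_eq' Finset.univ j₀]
    simp [mul_assoc, hu.unit_spec]
  have h1 : Nat.card (Matrix (Fin k) (Fin n) (ZMod q))
      = Nat.card ((Matrix (Fin k) (Fin n) (ZMod q)) ⧸ φ.ker) * Nat.card φ.ker :=
    AddSubgroup.card_eq_card_quotient_mul_card_addSubgroup φ.ker
  have h2 : Nat.card ((Matrix (Fin k) (Fin n) (ZMod q)) ⧸ φ.ker) = q ^ k := by
    rw [Nat.card_congr (QuotientAddGroup.quotientKerEquivOfSurjective φ hsurj).toEquiv]
    simp [Nat.card_pi, ZMod.card]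
  have h3 : Nat.card (Matrix (Fin k) (Fin n) (ZMod q)) = q ^ (k * n) := by
    rw [Nat.card_congr (Matrix.of (m := Fin k) (n := Fin n) (α := ZMod q)).symm]
    simp [ZMod.card, ← pow_mul, Nat.mul_comm n k]
  have h4 : Nat.card {H : Matrix (Fin k) (Fin n) (ZMod q) // H.mulVec v = 0}
      = Nat.card φ.ker := by
    apply Nat.card_congr
    exact Equiv.subtypeEquivRight fun H => by simp [AddMonoidHom.mem_ker, φ]
  rw [h4, mul_comm]
  rw [← h2, ← h1, h3]

def zeta (n q : ℕ) (z : Fin n → Bool) : Fin n → ZMod q := fun i => if z i then 1 else 0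

lemma collision_sum (k n q : ℕ) [NeZero q] {z z' : Fin n → Bool} (hzz : z ≠ z') :
    ∑ H : Matrix (Fin k) (Fin n) (ZMod q),
      (if H.mulVec (zeta n q z) = H.mulVec (zeta n q z') then (1 : ℝ) else 0)
      = (q : ℝ) ^ (k * n) / (q : ℝ) ^ k := by
  classical
  obtain ⟨j₀, hj⟩ := Function.ne_iff.mp hzz
  have hu : IsUnit (zeta n q z j₀ - zeta n q z' j₀) := by
    unfold zeta
    cases hz : z j₀ <;> cases hz' : z' j₀ <;> simp_all
  have hcount := ker_count k n q (zeta n q z - zeta n q z') j₀ hu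
  have hiff : ∀ H : Matrix (Fin k) (Fin n) (ZMod q),
      (H.mulVec (zeta n q z) = H.mulVec (zeta n q z'))
        ↔ H.mulVec (zeta n q z - zeta n q z') = 0 := by
    intro H
    rw [Matrix.mulVec_sub, sub_eq_zero]
  have hcard : (Finset.univ.filter fun H : Matrix (Fin k) (Fin n) (ZMod q) =>
      H.mulVec (zeta n q z) = H.mulVec (zeta n q z')).card * q ^ k = q ^ (k * n) := by
    rw [← hcount]
    congr 1
    rw [← Fintype.card_subtype, ← Nat.card_eq_fintype_card]
    exact Nat.card_congr (Equiv.subtypeEquivRight hiff)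
  rw [Finset.sum_boole]
  have hq0 : (0 : ℝ) < (q : ℝ) := by
    exact_mod_cast Nat.pos_of_ne_zero (NeZero.ne q)
  rw [eq_div_iff (by positivity)]
  exact_mod_cast congrArg (Nat.cast (R := ℝ)) hcard


lemma cs_abs {ι : Type*} (s : Finset ι) (f : ι → ℝ) :
    ∑ i ∈ s, |f i| ≤ Real.sqrt (s.card * ∑ i ∈ s, f i ^ 2) := by
  have h := sq_sum_le_card_mul_sum_sq (s := s) (f := fun i => |f i|)
  calc ∑ i ∈ s, |f i| = Real.sqrt ((∑ i ∈ s, |f i|) ^ 2) :=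
        (Real.sqrt_sq (by positivity)).symm
    _ ≤ Real.sqrt (s.card * ∑ i ∈ s, f i ^ 2) := by
        apply Real.sqrt_le_sqrt
        simpa [sq_abs] using h

lemma card_matrix (k n q : ℕ) [NeZero q] :
    (Fintype.card (Matrix (Fin k) (Fin n) (ZMod q)) : ℝ) = (q : ℝ) ^ (k * n) := by
  rw [Fintype.card_congr (Matrix.of (m := Fin k) (n := Fin n) (α := ZMod q)).symm]
  simp [ZMod.card, ← pow_mul, Nat.mul_comm n k]

noncomputable def Nr (k n q : ℕ) [NeZero q] (H : Matrix (Fin k) (Fin n) (ZMod q))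
    (y : Fin k → ZMod q) : ℝ :=
  ∑ z : Fin n → Bool, if H.mulVec (zeta n q z) = y then (1 : ℝ) else 0

lemma Nr_sum (k n q : ℕ) [NeZero q] (H : Matrix (Fin k) (Fin n) (ZMod q)) :
    ∑ y : Fin k → ZMod q, Nr k n q H y = (2 : ℝ) ^ n := by
  unfold Nr
  rw [Finset.sum_comm]
  simp [Finset.sum_ite_eq, Finset.card_univ]

lemma sum_ind_prod {β : Type*} [Fintype β] [DecidableEq β] (a b : β) :
    ∑ y : β, (if a = y then (1 : ℝ) else 0) * (if b = y then (1 : ℝ) else 0)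
      = if a = b then 1 else 0 := by
  simp [ite_mul, Finset.sum_ite_eq, eq_comm]

lemma Nr_sq_sum (k n q : ℕ) [NeZero q] :
    ∑ H : Matrix (Fin k) (Fin n) (ZMod q), ∑ y : Fin k → ZMod q, (Nr k n q H y) ^ 2
      = (2 : ℝ) ^ n * (q : ℝ) ^ (k * n)
        + ((2 : ℝ) ^ n * (2 : ℝ) ^ n - (2 : ℝ) ^ n) * ((q : ℝ) ^ (k * n) / (q : ℝ) ^ k) := by
  classical
  have key : ∀ H : Matrix (Fin k) (Fin n) (ZMod q), ∀ y,
      (Nr k n q H y) ^ 2 = ∑ z : Fin n → Bool, ∑ z' : Fin n → Bool,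
        (if H.mulVec (zeta n q z) = y then (1 : ℝ) else 0)
          * (if H.mulVec (zeta n q z') = y then (1 : ℝ) else 0) := by
    intro H y
    rw [sq, Nr, Finset.sum_mul_sum]
  have step1 : ∀ H : Matrix (Fin k) (Fin n) (ZMod q),
      ∑ y : Fin k → ZMod q, (Nr k n q H y) ^ 2
        = ∑ z : Fin n → Bool, ∑ z' : Fin n → Bool,
            (if H.mulVec (zeta n q z) = H.mulVec (zeta n q z') then (1 : ℝ) else 0) := by
    intro H
    simp only [key]
    rw [Finset.sum_comm]
    congr 1; funext z
    rw [Finset.sum_comm]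
    congr 1; funext z'
    exact sum_ind_prod _ _
  simp only [step1]
  rw [Finset.sum_comm]
  have hdiag : ∀ z : Fin n → Bool,
      ∑ H : Matrix (Fin k) (Fin n) (ZMod q),
        (if H.mulVec (zeta n q z) = H.mulVec (zeta n q z) then (1 : ℝ) else 0)
        = (q : ℝ) ^ (k * n) := by
    intro z
    simp [Finset.card_univ, ← card_matrix k n q]
  have hsplit : ∀ z : Fin n → Bool,
      ∑ H : Matrix (Fin k) (Fin n) (ZMod q), ∑ z' : Fin n → Bool,
        (if H.mulVec (zeta n q z) = H.mulVec (zeta n q z') then (1 : ℝ) else 0)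
      = (q : ℝ) ^ (k * n) + ((2 : ℝ) ^ n - 1) * ((q : ℝ) ^ (k * n) / (q : ℝ) ^ k) := by
    intro z
    rw [Finset.sum_comm]
    have herase : ∑ z' ∈ Finset.univ.erase z,
        (∑ H : Matrix (Fin k) (Fin n) (ZMod q),
          if H.mulVec (zeta n q z) = H.mulVec (zeta n q z') then (1 : ℝ) else 0)
        = ((2 : ℝ) ^ n - 1) * ((q : ℝ) ^ (k * n) / (q : ℝ) ^ k) := by
      rw [Finset.sum_congr rfl (fun z' hz' => collision_sum k n q
        (Ne.symm (Finset.ne_of_mem_erase hz')))]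
      rw [Finset.sum_const, Finset.card_erase_of_mem (Finset.mem_univ z)]
      simp [Finset.card_univ, nsmul_eq_mul]
    rw [← Finset.sum_erase_add _ _ (Finset.mem_univ z), herase, hdiag z]
    ring
  rw [Finset.sum_congr rfl (fun z _ => hsplit z), Finset.sum_const, Finset.card_univ]
  simp only [nsmul_eq_mul, Fintype.card_pi, Fintype.card_bool, Finset.prod_const,
    Finset.card_univ, Fintype.card_fin]
  push_cast
  ring

lemma card_B (k q : ℕ) [NeZero q] : (Fintype.card (Fin k → ZMod q) : ℝ) = (q : ℝ) ^ k := by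
  simp [ZMod.card]

lemma D_bound (k n q : ℕ) [NeZero q] :
    ∑ H : Matrix (Fin k) (Fin n) (ZMod q), ∑ y : Fin k → ZMod q,
      (Nr k n q H y / 2 ^ n - ((q : ℝ) ^ k)⁻¹) ^ 2 ≤ (q : ℝ) ^ (k * n) / 2 ^ n := by
  have hq0 : (0 : ℝ) < (q : ℝ) := by exact_mod_cast Nat.pos_of_ne_zero (NeZero.ne q)
  set c : ℝ := ((q : ℝ) ^ k)⁻¹ with hc
  have hcpos : 0 < c := by positivity
  have hexp : ∀ H : Matrix (Fin k) (Fin n) (ZMod q),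
      ∑ y : Fin k → ZMod q, (Nr k n q H y / 2 ^ n - c) ^ 2
      = (∑ y : Fin k → ZMod q, (Nr k n q H y) ^ 2) / ((2 : ℝ) ^ n * 2 ^ n) - 2 * c + c := by
    intro H
    have e : ∀ y, (Nr k n q H y / 2 ^ n - c) ^ 2
        = (Nr k n q H y) ^ 2 / ((2 : ℝ) ^ n * 2 ^ n) - (2 * c / 2 ^ n) * Nr k n q H y + c ^ 2 := by
      intro y
      field_simp
      ring
    rw [Finset.sum_congr rfl fun y _ => e y, Finset.sum_add_distrib, Finset.sum_sub_distrib,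
      ← Finset.sum_div, ← Finset.mul_sum, Nr_sum, Finset.sum_const, Finset.card_univ,
      nsmul_eq_mul, card_B k q]
    have h1 : 2 * c / 2 ^ n * 2 ^ n = 2 * c := by field_simp
    have h2 : (q : ℝ) ^ k * c ^ 2 = c := by rw [hc, sq]; field_simp
    rw [h1, h2]
  rw [Finset.sum_congr rfl fun H _ => hexp H, Finset.sum_add_distrib, Finset.sum_sub_distrib,
    ← Finset.sum_div, Nr_sq_sum, Finset.sum_const, Finset.sum_const, Finset.card_univ,
    nsmul_eq_mul, nsmul_eq_mul, card_matrix k n q]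
  have hrw : ((q : ℝ) ^ (k * n) / (q : ℝ) ^ k) = (q : ℝ) ^ (k * n) * c := by
    rw [hc, div_eq_mul_inv]
  rw [hrw]
  have key : ((2 : ℝ) ^ n * (q : ℝ) ^ (k * n)
        + ((2 : ℝ) ^ n * 2 ^ n - 2 ^ n) * ((q : ℝ) ^ (k * n) * c)) / ((2 : ℝ) ^ n * 2 ^ n)
        - (q : ℝ) ^ (k * n) * (2 * c) + (q : ℝ) ^ (k * n) * c
      = (q : ℝ) ^ (k * n) / 2 ^ n - (q : ℝ) ^ (k * n) * c / 2 ^ n := by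
    field_simp
    ring
  rw [key]
  have : 0 ≤ (q : ℝ) ^ (k * n) * c / 2 ^ n := by positivity
  linarith

lemma T_bound (k n q : ℕ) [NeZero q] :
    ∑ H : Matrix (Fin k) (Fin n) (ZMod q), ∑ y : Fin k → ZMod q,
      |Nr k n q H y / 2 ^ n - ((q : ℝ) ^ k)⁻¹|
      ≤ (q : ℝ) ^ (k * n) * Real.sqrt ((q : ℝ) ^ k / 2 ^ n) := by
  have hq0 : (0 : ℝ) < (q : ℝ) := by exact_mod_cast Nat.pos_of_ne_zero (NeZero.ne q)
  set D : Matrix (Fin k) (Fin n) (ZMod q) → (Fin k → ZMod q) → ℝ :=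
    fun H y => Nr k n q H y / 2 ^ n - ((q : ℝ) ^ k)⁻¹ with hD
  have step1 : ∀ H, ∑ y : Fin k → ZMod q, |D H y|
      ≤ Real.sqrt ((q : ℝ) ^ k * ∑ y : Fin k → ZMod q, (D H y) ^ 2) := by
    intro H
    have h := cs_abs Finset.univ (D H)
    rwa [Finset.card_univ, card_B k q] at h
  calc ∑ H : Matrix (Fin k) (Fin n) (ZMod q), ∑ y : Fin k → ZMod q, |D H y|
      ≤ ∑ H : Matrix (Fin k) (Fin n) (ZMod q),
          Real.sqrt ((q : ℝ) ^ k * ∑ y : Fin k → ZMod q, (D H y) ^ 2) :=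
        Finset.sum_le_sum fun H _ => step1 H
    _ = ∑ H : Matrix (Fin k) (Fin n) (ZMod q),
          |Real.sqrt ((q : ℝ) ^ k * ∑ y : Fin k → ZMod q, (D H y) ^ 2)| := by
        exact Finset.sum_congr rfl fun H _ => (abs_of_nonneg (Real.sqrt_nonneg _)).symm
    _ ≤ Real.sqrt ((Finset.univ : Finset (Matrix (Fin k) (Fin n) (ZMod q))).card *
          ∑ H : Matrix (Fin k) (Fin n) (ZMod q),
            (Real.sqrt ((q : ℝ) ^ k * ∑ y : Fin k → ZMod q, (D H y) ^ 2)) ^ 2) :=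
        cs_abs _ _
    _ = Real.sqrt ((q : ℝ) ^ (k * n) *
          ((q : ℝ) ^ k * ∑ H : Matrix (Fin k) (Fin n) (ZMod q),
            ∑ y : Fin k → ZMod q, (D H y) ^ 2)) := by
        have inside : ∑ H : Matrix (Fin k) (Fin n) (ZMod q),
            (Real.sqrt ((q : ℝ) ^ k * ∑ y : Fin k → ZMod q, (D H y) ^ 2)) ^ 2
            = (q : ℝ) ^ k * ∑ H : Matrix (Fin k) (Fin n) (ZMod q),
                ∑ y : Fin k → ZMod q, (D H y) ^ 2 := by
          rw [Finset.mul_sum]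
          exact Finset.sum_congr rfl fun H _ => Real.sq_sqrt (by positivity)
        rw [Finset.card_univ, card_matrix k n q, inside]
    _ ≤ Real.sqrt ((q : ℝ) ^ (k * n) * ((q : ℝ) ^ k * ((q : ℝ) ^ (k * n) / 2 ^ n))) := by
        apply Real.sqrt_le_sqrt
        have h2 : (0 : ℝ) ≤ (q : ℝ) ^ k := by positivity
        exact mul_le_mul_of_nonneg_left
          (mul_le_mul_of_nonneg_left (D_bound k n q) h2) (by positivity)
    _ = (q : ℝ) ^ (k * n) * Real.sqrt ((q : ℝ) ^ k / 2 ^ n) := by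
        rw [show (q : ℝ) ^ (k * n) * ((q : ℝ) ^ k * ((q : ℝ) ^ (k * n) / 2 ^ n))
            = ((q : ℝ) ^ (k * n)) ^ 2 * ((q : ℝ) ^ k / 2 ^ n) by ring,
          Real.sqrt_mul (by positivity), Real.sqrt_sq (by positivity)]

lemma Q_apply (k n q : ℕ) [NeZero q] (x : Matrix (Fin k) (Fin n) (ZMod q) × (Fin k → ZMod q)) :
    ((((PMF.uniformOfFintype (Matrix (Fin k) (Fin n) (ZMod q))).bind fun H =>
        (PMF.uniformOfFintype (Fin k → ZMod q)).map fun u => (H, u)) x)).toReal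
      = ((q : ℝ) ^ (k * n) * (q : ℝ) ^ k)⁻¹ := by
  obtain ⟨H₀, y₀⟩ := x
  rw [PMF.bind_apply]
  simp only [PMF.map_apply, PMF.uniformOfFintype_apply, tsum_fintype, Prod.mk.injEq, ite_and]
  rw [Finset.sum_eq_single H₀]
  · simp only [if_pos rfl, if_true, Finset.sum_ite_eq, Finset.mem_univ, ENNReal.toReal_mul,
      ENNReal.toReal_inv, ENNReal.toReal_natCast]
    rw [card_matrix k n q, card_B k q, mul_inv]
  · intro b _ hb
    simp [Ne.symm hb]
  · simp

lemma P_apply (k n q : ℕ) [NeZero q] (x : Matrix (Fin k) (Fin n) (ZMod q) × (Fin k → ZMod q)) :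
    ((((PMF.uniformOfFintype (Matrix (Fin k) (Fin n) (ZMod q))).bind fun H =>
        (PMF.uniformOfFintype (Fin n → Bool)).map fun z =>
          (H, H.mulVec fun i => if z i then (1 : ZMod q) else 0)) x)).toReal
      = Nr k n q x.1 x.2 / ((q : ℝ) ^ (k * n) * 2 ^ n) := by
  obtain ⟨H₀, y₀⟩ := x
  rw [PMF.bind_apply]
  simp only [PMF.map_apply, PMF.uniformOfFintype_apply, tsum_fintype, Prod.mk.injEq, ite_and]
  rw [Finset.sum_eq_single H₀]
  · simp only [if_pos rfl, if_true, ENNReal.toReal_mul, ENNReal.toReal_inv, ENNReal.toReal_natCast]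
    have hsum : (∑ z : Fin n → Bool,
        if y₀ = H₀.mulVec fun i => if z i then (1 : ZMod q) else 0
          then ((Fintype.card (Fin n → Bool) : ENNReal))⁻¹ else (0 : ENNReal)).toReal
        = Nr k n q H₀ y₀ / 2 ^ n := by
      rw [ENNReal.toReal_sum (fun a _ => by split <;> simp)]
      rw [Nr, Finset.sum_div]
      refine Finset.sum_congr rfl fun z _ => ?_
      unfold zeta
      by_cases h : (H₀.mulVec fun i => if z i then (1 : ZMod q) else 0) = y₀
      · rw [if_pos h.symm, if_pos h]
        simp [ENNReal.toReal_inv]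
      · rw [if_neg (fun hh => h hh.symm), if_neg h]
        simp
    rw [hsum, card_matrix k n q]
    rw [inv_mul_eq_div, div_div, mul_comm]
  · intro b _ hb
    simp [Ne.symm hb]
  · simp

lemma eps_bound (k n q : ℕ) (hq : 1 ≤ q) (ε : ℝ) (hε : 0 < ε)
    (hdim : (k : ℝ) * Real.logb 2 q + 2 * Real.logb 2 (1 / ε) ≤ (n : ℝ)) :
    (q : ℝ) ^ k / 2 ^ n ≤ ε ^ 2 := by
  have hq0 : (0 : ℝ) < (q : ℝ) := by exact_mod_cast hq
  have h1 : (2 : ℝ) ^ ((k : ℝ) * Real.logb 2 q + 2 * Real.logb 2 (1 / ε))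
      = (q : ℝ) ^ k * (1 / ε) ^ 2 := by
    rw [Real.rpow_add (by norm_num), mul_comm (k : ℝ), Real.rpow_mul (by norm_num),
      Real.rpow_logb (by norm_num) (by norm_num) hq0, mul_comm (2 : ℝ) (Real.logb 2 (1/ε)),
      Real.rpow_mul (by norm_num), Real.rpow_logb (by norm_num) (by norm_num) (by positivity),
      Real.rpow_natCast, Real.rpow_two]
  have h2 : (2 : ℝ) ^ ((k : ℝ) * Real.logb 2 q + 2 * Real.logb 2 (1 / ε)) ≤ (2 : ℝ) ^ (n : ℝ) :=
    Real.rpow_le_rpow_of_exponent_le (by norm_num) hdim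
  rw [h1, Real.rpow_natCast] at h2
  rw [div_le_iff₀ (by positivity)]
  calc (q : ℝ) ^ k = (q : ℝ) ^ k * (1 / ε) ^ 2 * ε ^ 2 := by field_simp
    _ ≤ 2 ^ n * ε ^ 2 := mul_le_mul_of_nonneg_right h2 (by positivity)
    _ = ε ^ 2 * 2 ^ n := by ring

/-- **Lemma 2.3 (leftover hash lemma).** Let `k, n, q ≥ 1` be integers and `ε > 0` be such
that `n ≥ k·log₂ q + 2·log₂(1/ε)`.  For `H` uniform in `T_q^{k×n}`, `z` uniform in `{0,1}ⁿ`
and `u` uniform in `T_q^k`, the statistical distance between `(H, H·z)` and `(H, u)` is at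
most `ε`.  (Here `T_q = {0, 1/q, …, (q−1)/q} ⊆ ℝ/ℤ` is identified with `ZMod q`, under which
identification `H·z mod 1` becomes matrix-vector multiplication over `ZMod q`.) -/
theorem leftover_hash_lemma (k n q : ℕ) [NeZero q] (hk : 1 ≤ k) (hn : 1 ≤ n) (hq : 1 ≤ q)
    (ε : ℝ) (hε : 0 < ε)
    (hdim : (k : ℝ) * Real.logb 2 q + 2 * Real.logb 2 (1 / ε) ≤ (n : ℝ)) :
    (1 / 2) * ∑' x : Matrix (Fin k) (Fin n) (ZMod q) × (Fin k → ZMod q),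
        abs (((((PMF.uniformOfFintype (Matrix (Fin k) (Fin n) (ZMod q))).bind fun H =>
              (PMF.uniformOfFintype (Fin n → Bool)).map fun z =>
                (H, H.mulVec fun i => if z i then (1 : ZMod q) else 0)) x).toReal)
          - ((((PMF.uniformOfFintype (Matrix (Fin k) (Fin n) (ZMod q))).bind fun H =>
              (PMF.uniformOfFintype (Fin k → ZMod q)).map fun u => (H, u)) x).toReal))
      ≤ ε := by

  classical
  have hq0 : (0 : ℝ) < (q : ℝ) := by exact_mod_cast hq
  have hcA : (0 : ℝ) < (q : ℝ) ^ (k * n) := by positivity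
  rw [tsum_fintype]
  have habs : ∀ x : Matrix (Fin k) (Fin n) (ZMod q) × (Fin k → ZMod q),
      abs (((((PMF.uniformOfFintype (Matrix (Fin k) (Fin n) (ZMod q))).bind fun H =>
              (PMF.uniformOfFintype (Fin n → Bool)).map fun z =>
                (H, H.mulVec fun i => if z i then (1 : ZMod q) else 0)) x).toReal)
          - ((((PMF.uniformOfFintype (Matrix (Fin k) (Fin n) (ZMod q))).bind fun H =>
              (PMF.uniformOfFintype (Fin k → ZMod q)).map fun u => (H, u)) x).toReal))
        = |Nr k n q x.1 x.2 / 2 ^ n - ((q : ℝ) ^ k)⁻¹| / (q : ℝ) ^ (k * n) := by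
    intro x
    rw [P_apply, Q_apply]
    have : Nr k n q x.1 x.2 / ((q : ℝ) ^ (k * n) * 2 ^ n) - ((q : ℝ) ^ (k * n) * (q : ℝ) ^ k)⁻¹
        = (Nr k n q x.1 x.2 / 2 ^ n - ((q : ℝ) ^ k)⁻¹) / (q : ℝ) ^ (k * n) := by
      field_simp
    rw [this, abs_div, abs_of_pos hcA]
  rw [Finset.sum_congr rfl fun x _ => habs x]
  have hsplit : ∑ x : Matrix (Fin k) (Fin n) (ZMod q) × (Fin k → ZMod q),
      |Nr k n q x.1 x.2 / 2 ^ n - ((q : ℝ) ^ k)⁻¹| / (q : ℝ) ^ (k * n)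
      = (∑ H : Matrix (Fin k) (Fin n) (ZMod q), ∑ y : Fin k → ZMod q,
          |Nr k n q H y / 2 ^ n - ((q : ℝ) ^ k)⁻¹|) / (q : ℝ) ^ (k * n) := by
    rw [← Finset.sum_div]
    congr 1
    exact Fintype.sum_prod_type
      (f := fun x : Matrix (Fin k) (Fin n) (ZMod q) × (Fin k → ZMod q) =>
        |Nr k n q x.1 x.2 / 2 ^ n - ((q : ℝ) ^ k)⁻¹|)
  rw [hsplit]
  have hT := T_bound k n q
  have hsqrt : Real.sqrt ((q : ℝ) ^ k / 2 ^ n) ≤ ε := by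
    have h := eps_bound k n q hq ε hε hdim
    calc Real.sqrt ((q : ℝ) ^ k / 2 ^ n) ≤ Real.sqrt (ε ^ 2) := Real.sqrt_le_sqrt h
      _ = ε := Real.sqrt_sq hε.le
  calc (1 / 2) * ((∑ H : Matrix (Fin k) (Fin n) (ZMod q), ∑ y : Fin k → ZMod q,
          |Nr k n q H y / 2 ^ n - ((q : ℝ) ^ k)⁻¹|) / (q : ℝ) ^ (k * n))
      ≤ (1 / 2) * (((q : ℝ) ^ (k * n) * Real.sqrt ((q : ℝ) ^ k / 2 ^ n)) / (q : ℝ) ^ (k * n)) := by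
        apply mul_le_mul_of_nonneg_left _ (by norm_num)
        exact (div_le_div_iff_of_pos_right hcA).mpr hT
    _ = (1 / 2) * Real.sqrt ((q : ℝ) ^ k / 2 ^ n) := by
        rw [mul_comm ((q : ℝ) ^ (k * n)) _, mul_div_assoc, div_self (ne_of_gt hcA), mul_one]
    _ ≤ (1 / 2) * ε := by
        apply mul_le_mul_of_nonneg_left hsqrt (by norm_num)
    _ ≤ ε := by linarith
end

section
/- Let q, k, n' ≥ 1 be integers, n = k·n', g = (1, q, q², …, q^{k−1})^T ∈ ℤ^k, and G = I_{n'} ⊗ g ∈ ℤ^{n×n'}. Let M ∈ ℝ^{k×k} be the upper triangular matrix with entries M_{ij} = q^{−(j−i+1)} for j ≥ i and M_{ij} = 0 for j < i, and let B = I_{n'} ⊗ M ∈ ℝ^{n×n}. Then: (1) the columns of B form a basis of the lattice Λ = q^{−k}·G·ℤ^{n'} + ℤⁿ, i.e., B·ℤⁿ = Λ; and (2) the Gram–Schmidt orthogonalization of the columns of B (processed from left to right) equals q^{−1}·Iₙ, so in particular ‖B̃‖ = q^{−1}. -/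
open scoped Matrix

noncomputable section

/-- The index `b·k + j` of position `j` inside block `b`, for `n = n'·k` coordinates
grouped into `n'` blocks of size `k`. -/
def blockIdx (n' k : ℕ) (b : Fin n') (j : Fin k) : Fin (n' * k) :=
  ⟨b.val * k + j.val, by
    have hb := b.isLt; have hj := j.isLt
    calc b.val * k + j.val < b.val * k + k := by omega
      _ = (b.val + 1) * k := by ring
      _ ≤ n' * k := Nat.mul_le_mul_right k hb⟩

/-- The matrix `G = I_{n'} ⊗ g` with `g = (1, q, q², …, q^{k−1})ᵀ ∈ ℤ^k`, an
`n × n'` integer matrix (`n = n'·k`) whose `b`-th column has the entries of `g` in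
block `b` and zeros elsewhere. -/
def Gmat (q n' k : ℕ) : Matrix (Fin (n' * k)) (Fin n') ℤ :=
  fun i b => if (i : ℕ) / k = (b : ℕ) then (q : ℤ) ^ ((i : ℕ) % k) else 0

/-- The block-diagonal matrix `B = I_{n'} ⊗ M ∈ ℝ^{n×n}` where `M ∈ ℝ^{k×k}` is upper
triangular with `M_{uv} = q^{−(v−u+1)}` for `v ≥ u` and `0` otherwise. -/
def Bmat (q n' k : ℕ) : Matrix (Fin (n' * k)) (Fin (n' * k)) ℝ :=
  fun i j =>
    if (i : ℕ) / k = (j : ℕ) / k ∧ (i : ℕ) % k ≤ (j : ℕ) % k then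
      ((q : ℝ)) ^ (-(((j : ℕ) % k - (i : ℕ) % k : ℕ) + 1) : ℤ)
    else 0

/-- Gram–Schmidt orthogonalization for a finite family of vectors in euclidean space,
processed left to right (a wrapper around `gramSchmidt` providing the order instances). -/
noncomputable def gramSchmidtFin {N : ℕ} [NeZero N]
    (f : Fin N → EuclideanSpace ℝ (Fin N)) : Fin N → EuclideanSpace ℝ (Fin N) :=
  haveI : WellFoundedLT (Fin N) := inferInstance
  InnerProductSpace.gramSchmidt ℝ f

/-- The columns of `B` as vectors of the euclidean space `ℝⁿ`. -/
def Bcols (q n' k : ℕ) (j : Fin (n' * k)) : EuclideanSpace ℝ (Fin (n' * k)) :=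
  (WithLp.equiv 2 (Fin (n' * k) → ℝ)).symm (fun i => Bmat q n' k i j)

/-!
Each diagonal block `M` of `B` is upper triangular with diagonal `q⁻¹`, so the `j`-th column of
`B` is `q⁻¹ eⱼ` plus a combination of earlier standard basis vectors; Gram–Schmidt removes exactly
that combination and returns `q⁻¹ eⱼ`.

For the lattice, compare generators block by block. The last column of `M` is `q^{-k} g`; column
`s` of `M` is `q^{k-1-s} · q^{-k} g` minus an integer vector (the entries `q^{t-s-1}`, `t > s`);
and `M⁻¹ = q·I - N` with `N` the shift, so every unit vector is an integer combination of two
columns of `B`.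
-/

open Submodule Set InnerProductSpace

section GramSchmidt

variable {𝕜 E ι : Type*} [RCLike 𝕜] [NormedAddCommGroup E] [InnerProductSpace 𝕜 E]
  [LinearOrder ι] [LocallyFiniteOrderBot ι] [WellFoundedLT ι]

theorem gramSchmidt_eq_of_sub_mem_span {e f : ι → E}
    (he : Pairwise fun i j => inner 𝕜 (e i) (e j) = 0)
    (hf : ∀ j, f j - e j ∈ span 𝕜 (e '' Iio j)) : gramSchmidt 𝕜 f = e := by
  funext j
  induction j using WellFoundedLT.induction with
  | ind j ih =>
  set K := span 𝕜 (e '' Iio j)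
  have hproj : gramSchmidt 𝕜 f j - f j ∈ K := by
    rw [gramSchmidt_def, sub_sub_cancel_left]
    refine neg_mem (sum_mem fun i hi => ?_)
    have hi : i < j := Finset.mem_Iio.1 hi
    rw [ih i hi, starProjection_singleton]
    exact smul_mem _ _ (subset_span (mem_image_of_mem e hi))
  have hmem : gramSchmidt 𝕜 f j - e j ∈ K :=
    sub_add_sub_cancel (gramSchmidt 𝕜 f j) (f j) (e j) ▸ add_mem hproj (hf j)
  have hperp : K ⟂ 𝕜 ∙ (gramSchmidt 𝕜 f j - e j) := by
    rw [isOrtho_span]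
    rintro _ ⟨i, hi, rfl⟩ _ rfl
    rw [inner_sub_right, ← ih i hi, gramSchmidt_orthogonal 𝕜 f hi.ne, ih i hi, he hi.ne, sub_zero]
  exact sub_eq_zero.1 (inner_self_eq_zero.1 (hperp.inner_eq hmem (mem_span_singleton_self _)))

theorem gramSchmidt_toLp_col_of_blockTriangular [Fintype ι] (B : Matrix ι ι 𝕜)
    (hB : B.BlockTriangular id) (hdiag : ∀ i, B i i ≠ 0) :
    gramSchmidt 𝕜 (fun j => WithLp.toLp 2 (B.col j))
      = fun j => B j j • EuclideanSpace.single j 1 := by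
  refine gramSchmidt_eq_of_sub_mem_span (fun i j hij => ?_) fun j => ?_
  · simp [inner_smul_left, inner_smul_right, EuclideanSpace.inner_single_left, hij]
  · have hsum : WithLp.toLp 2 (B.col j) - B j j • EuclideanSpace.single j 1
        = ∑ i ∈ Finset.Iio j, (B i j / B i i) • (B i i • EuclideanSpace.single i (1 : 𝕜)) := by
      ext m
      rcases lt_trichotomy m j with hmj | rfl | hjm
      · simp [Finset.sum_apply, Pi.single_apply, hdiag, hmj, hmj.ne]
      · simp [Finset.sum_apply, Pi.single_apply]
      · simp [Finset.sum_apply, Pi.single_apply, hjm.ne', hjm.not_gt, hB hjm]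
    rw [hsum]
    exact sum_mem fun i hi => smul_mem _ _ (subset_span (mem_image_of_mem _ (Finset.mem_Iio.1 hi)))

end GramSchmidt

section IntegerSpan

variable {m p : Type*} [Fintype p]

theorem setOf_mulVec_intCast_eq_span (B : Matrix m p ℝ) :
    {x | ∃ z : p → ℤ, x = B *ᵥ fun j => (z j : ℝ)} = (span ℤ (range B.col) : Set (m → ℝ)) := by
  ext x
  rw [SetLike.mem_coe, mem_span_range_iff_exists_fun, mem_ofPred_eq]
  refine exists_congr fun z => ?_
  rw [eq_comm]
  suffices B *ᵥ (fun j => (z j : ℝ)) = ∑ j, z j • B.col j by rw [this]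
  ext i
  simp [Matrix.mulVec, dotProduct, Finset.sum_apply, mul_comm]

theorem setOf_smul_mulVec_add_intCast_eq_span [Fintype m] [DecidableEq m] (G : Matrix m p ℤ)
    (c : ℝ) :
    {x | ∃ (w : p → ℤ) (y : m → ℤ), x = fun i => c * ((G *ᵥ w) i : ℝ) + (y i : ℝ)}
      = ((span ℤ (range (c • G.map (Int.cast : ℤ → ℝ)).col) ⊔
          span ℤ (range (1 : Matrix m m ℝ).col) : Submodule ℤ (m → ℝ)) : Set (m → ℝ)) := by
  ext x
  rw [SetLike.mem_coe, mem_sup, mem_ofPred_eq]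
  simp only [← SetLike.mem_coe, ← setOf_mulVec_intCast_eq_span, mem_ofPred_eq]
  have hG (w : p → ℤ) :
      ((c • G.map (Int.cast : ℤ → ℝ)) *ᵥ fun j => (w j : ℝ)) = fun i => c * ((G *ᵥ w) i : ℝ) := by
    ext i
    simp [Matrix.mulVec, dotProduct, Finset.mul_sum, mul_assoc]
  simp only [hG, Matrix.one_mulVec]
  constructor
  · rintro ⟨w, y, rfl⟩
    exact ⟨_, ⟨w, rfl⟩, _, ⟨y, rfl⟩, rfl⟩
  · rintro ⟨_, ⟨w, rfl⟩, _, ⟨y, rfl⟩, rfl⟩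
    exact ⟨w, y, rfl⟩

theorem intCast_mem_span_col_one [Fintype m] [DecidableEq m] (y : m → ℤ) :
    (fun i => (y i : ℝ)) ∈ span ℤ (range (1 : Matrix m m ℝ).col) := by
  rw [← SetLike.mem_coe, ← setOf_mulVec_intCast_eq_span]
  exact ⟨y, (Matrix.one_mulVec _).symm⟩

end IntegerSpan

section Blocks

variable {q n' k : ℕ}

theorem finProdFinEquiv_val_div (a : Fin n') (r : Fin k) : (finProdFinEquiv (a, r) : ℕ) / k = a :=
  congrArg (fun x => (x.1 : ℕ)) (finProdFinEquiv.symm_apply_apply (a, r))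

theorem finProdFinEquiv_val_mod (a : Fin n') (r : Fin k) : (finProdFinEquiv (a, r) : ℕ) % k = r :=
  congrArg (fun x => (x.2 : ℕ)) (finProdFinEquiv.symm_apply_apply (a, r))

theorem Bmat_finProdFinEquiv (a b : Fin n') (r s : Fin k) :
    Bmat q n' k (finProdFinEquiv (a, r)) (finProdFinEquiv (b, s))
      = if a = b ∧ r ≤ s then (q : ℝ) ^ ((r : ℤ) - s - 1) else 0 := by
  simp only [Bmat, finProdFinEquiv_val_div, finProdFinEquiv_val_mod, Fin.val_inj, Fin.le_def]
  split_ifs with h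
  · congr 1; omega
  · rfl

theorem Gmat_finProdFinEquiv (a b : Fin n') (r : Fin k) :
    Gmat q n' k (finProdFinEquiv (a, r)) b = if a = b then (q : ℤ) ^ (r : ℕ) else 0 := by
  simp only [Gmat, finProdFinEquiv_val_div, finProdFinEquiv_val_mod, Fin.val_inj]

theorem smul_Gmat_col_eq_Bmat_col (hq : q ≠ 0) (hk : 0 < k) (b : Fin n') :
    ((q : ℝ) ^ (-(k : ℤ)) • (Gmat q n' k).map (Int.cast : ℤ → ℝ)).col b
      = (Bmat q n' k).col (finProdFinEquiv (b, ⟨k - 1, Nat.sub_one_lt_of_lt hk⟩)) := by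
  ext i
  obtain ⟨⟨a, r⟩, rfl⟩ := finProdFinEquiv.surjective i
  simp only [Matrix.col_apply, Matrix.smul_apply, Matrix.map_apply, Gmat_finProdFinEquiv,
    Bmat_finProdFinEquiv, Fin.le_def]
  split_ifs with h₁ h₂ h₂
  · rw [smul_eq_mul, Int.cast_pow, Int.cast_natCast, ← zpow_natCast,
      ← zpow_add₀ (by exact_mod_cast hq)]
    congr 1; omega
  · omega
  · exact absurd h₂.1 h₁
  · simp

theorem Bmat_col_of_val_eq_zero (hq : q ≠ 0) (b : Fin n') {r : Fin k} (hr : (r : ℕ) = 0) :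
    q • (Bmat q n' k).col (finProdFinEquiv (b, r))
      = (1 : Matrix (Fin (n' * k)) (Fin (n' * k)) ℝ).col (finProdFinEquiv (b, r)) := by
  ext i
  obtain ⟨⟨a, s⟩, rfl⟩ := finProdFinEquiv.surjective i
  simp only [Pi.smul_apply, Matrix.col_apply, Bmat_finProdFinEquiv, Matrix.one_apply,
    finProdFinEquiv.injective.eq_iff, Prod.mk.injEq, Fin.le_def, Fin.ext_iff, hr]
  split_ifs with h₁ h₂ h₂
  · rw [nsmul_eq_mul, ← zpow_one_add₀ (by exact_mod_cast hq), ← zpow_zero (q : ℝ)]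
    congr 1; omega
  · omega
  · omega
  · simp

theorem Bmat_col_succ (hq : q ≠ 0) (b : Fin n') {r s : Fin k} (hrs : (r : ℕ) = s + 1) :
    q • (Bmat q n' k).col (finProdFinEquiv (b, r))
      = (1 : Matrix (Fin (n' * k)) (Fin (n' * k)) ℝ).col (finProdFinEquiv (b, r))
        + (Bmat q n' k).col (finProdFinEquiv (b, s)) := by
  ext i
  obtain ⟨⟨a, t⟩, rfl⟩ := finProdFinEquiv.surjective i
  simp only [Pi.smul_apply, Pi.add_apply, Matrix.col_apply, Bmat_finProdFinEquiv,
    Matrix.one_apply, finProdFinEquiv.injective.eq_iff, Prod.mk.injEq, Fin.le_def, Fin.ext_iff]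
  have hq' : (q : ℝ) ≠ 0 := by exact_mod_cast hq
  split_ifs <;> try omega
  · rw [nsmul_eq_mul, ← zpow_one_add₀ hq', add_zero, ← zpow_zero (q : ℝ)]
    congr 1; omega
  · rw [nsmul_eq_mul, ← zpow_one_add₀ hq', zero_add]
    congr 1; omega
  · simp

theorem Bmat_col_eq_nsmul_add_intCast (hq : q ≠ 0) (b : Fin n') (s : Fin k) :
    ∃ y : Fin (n' * k) → ℤ, (Bmat q n' k).col (finProdFinEquiv (b, s))
      = q ^ (k - 1 - s) • ((q : ℝ) ^ (-(k : ℤ)) • (Gmat q n' k).map (Int.cast : ℤ → ℝ)).col b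
        + fun i => (y i : ℝ) := by
  refine ⟨fun i => if (finProdFinEquiv.symm i).1 = b ∧ s < (finProdFinEquiv.symm i).2
    then -(q : ℤ) ^ ((finProdFinEquiv.symm i).2 - s - 1 : ℕ) else 0, ?_⟩
  ext i
  obtain ⟨⟨a, t⟩, rfl⟩ := finProdFinEquiv.surjective i
  have hq' : (q : ℝ) ≠ 0 := by exact_mod_cast hq
  simp only [Pi.smul_apply, Pi.add_apply, Matrix.col_apply, Matrix.smul_apply, Matrix.map_apply,
    Bmat_finProdFinEquiv, Gmat_finProdFinEquiv, Equiv.symm_apply_apply, Fin.le_def, Fin.lt_def]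
  by_cases hab : a = b
  · have hpow : q ^ (k - 1 - s) • (q : ℝ) ^ (-(k : ℤ)) • (((q : ℤ) ^ (t : ℕ) : ℤ) : ℝ)
        = (q : ℝ) ^ ((t : ℤ) - s - 1) := by
      rw [nsmul_eq_mul, smul_eq_mul, Int.cast_pow, Int.cast_natCast, Nat.cast_pow,
        ← zpow_natCast, ← zpow_natCast, ← zpow_add₀ hq', ← zpow_add₀ hq']
      congr 1; omega
    simp only [hab, true_and, if_true, hpow]
    split_ifs with hts hst
    · omega
    · simp
    · rw [Int.cast_neg, Int.cast_pow, Int.cast_natCast, ← zpow_natCast, ← sub_eq_add_neg,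
        eq_comm, sub_eq_zero]
      congr 1; omega
    · omega
  · simp [hab]

theorem Bmat_self (i : Fin (n' * k)) : Bmat q n' k i i = (q : ℝ)⁻¹ := by
  simp [Bmat]

theorem Bmat_blockTriangular : (Bmat q n' k).BlockTriangular id := by
  intro i j hji
  obtain ⟨⟨a, r⟩, rfl⟩ := finProdFinEquiv.surjective i
  obtain ⟨⟨b, s⟩, rfl⟩ := finProdFinEquiv.surjective j
  rw [Bmat_finProdFinEquiv, if_neg]
  rintro ⟨rfl, hrs⟩
  simp only [id, Fin.lt_def, finProdFinEquiv_apply_val] at hji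
  rw [Fin.le_def] at hrs
  omega

theorem span_Bmat_col_eq (hq : q ≠ 0) (hk : 0 < k) :
    span ℤ (range (Bmat q n' k).col)
      = span ℤ (range ((q : ℝ) ^ (-(k : ℤ)) • (Gmat q n' k).map (Int.cast : ℤ → ℝ)).col)
        ⊔ span ℤ (range (1 : Matrix (Fin (n' * k)) (Fin (n' * k)) ℝ).col) := by
  refine le_antisymm (span_le.2 <| range_subset_iff.2 fun j => ?_) (sup_le ?_ ?_)
  · obtain ⟨⟨b, s⟩, rfl⟩ := finProdFinEquiv.surjective j
    obtain ⟨y, hy⟩ := Bmat_col_eq_nsmul_add_intCast hq b s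
    rw [SetLike.mem_coe, hy]
    exact add_mem (mem_sup_left (nsmul_mem (subset_span (mem_range_self b)) _))
      (mem_sup_right (intCast_mem_span_col_one y))
  · refine span_le.2 <| range_subset_iff.2 fun b => ?_
    rw [smul_Gmat_col_eq_Bmat_col hq hk]
    exact subset_span (mem_range_self _)
  · refine span_le.2 <| range_subset_iff.2 fun i => ?_
    obtain ⟨⟨b, r⟩, rfl⟩ := finProdFinEquiv.surjective i
    have hcol (r : Fin k) :
        (Bmat q n' k).col (finProdFinEquiv (b, r)) ∈ span ℤ (range (Bmat q n' k).col) :=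
      subset_span (mem_range_self _)
    by_cases hr : (r : ℕ) = 0
    · rw [← Bmat_col_of_val_eq_zero hq b hr]
      exact nsmul_mem (hcol r) q
    · let s : Fin k := ⟨r - 1, by omega⟩
      have hrs : (r : ℕ) = s + 1 := by simp only [s]; omega
      rw [← add_sub_cancel_right ((1 : Matrix _ _ ℝ).col _)
        ((Bmat q n' k).col (finProdFinEquiv (b, s))), ← Bmat_col_succ hq b hrs]
      exact sub_mem (nsmul_mem (hcol r) q) (hcol s)

end Blocks

theorem tensor_basis_gramSchmidt_general (q n' k : ℕ) [NeZero (n' * k)]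
    (hq : 1 ≤ q) (hk : 1 ≤ k) :
    ({x : Fin (n' * k) → ℝ | ∃ z : Fin (n' * k) → ℤ,
        x = (Bmat q n' k).mulVec (fun i => (z i : ℝ))}
      = {x : Fin (n' * k) → ℝ | ∃ (w : Fin n' → ℤ) (y : Fin (n' * k) → ℤ),
          x = fun i => (q : ℝ) ^ (-(k : ℤ)) * (((Gmat q n' k).mulVec w) i : ℝ) + (y i : ℝ)})
    ∧ (∀ j : Fin (n' * k),
        gramSchmidtFin (Bcols q n' k) j = (q : ℝ)⁻¹ • EuclideanSpace.single j (1 : ℝ))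
    ∧ (∀ j : Fin (n' * k), ‖gramSchmidtFin (Bcols q n' k) j‖ = (q : ℝ)⁻¹) := by
  have hq₀ : q ≠ 0 := Nat.one_le_iff_ne_zero.1 hq
  have hgs (j : Fin (n' * k)) :
      gramSchmidtFin (Bcols q n' k) j = (q : ℝ)⁻¹ • EuclideanSpace.single j (1 : ℝ) := by
    have h := congrFun (gramSchmidt_toLp_col_of_blockTriangular (Bmat q n' k)
      Bmat_blockTriangular fun i => by simp [Bmat_self, hq₀]) j
    simp only [Bmat_self] at h
    exact h
  refine ⟨?_, hgs, fun j => ?_⟩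
  · rw [setOf_mulVec_intCast_eq_span, setOf_smul_mulVec_add_intCast_eq_span,
      span_Bmat_col_eq hq₀ hk]
  · rw [hgs, norm_smul, PiLp.norm_single, norm_one, mul_one, norm_inv, RCLike.norm_natCast]

/-- **Computation in Corollary 3.4.** Let `q, k, n' ≥ 1`, `n = k·n'`,
`g = (1,q,…,q^{k−1})ᵀ`, `G = I_{n'} ⊗ g ∈ ℤ^{n×n'}`, and let `B = I_{n'} ⊗ M ∈ ℝ^{n×n}`
with `M` upper triangular, `M_{uv} = q^{−(v−u+1)}` for `v ≥ u`.  Then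
(1) the columns of `B` form a basis of the lattice `Λ = q^{−k}·G·ℤ^{n'} + ℤⁿ`, i.e.
`B·ℤⁿ = Λ`; and (2) the Gram–Schmidt orthogonalization of the columns of `B` (processed
from left to right) is `q^{−1}·Iₙ`, so that every Gram–Schmidt vector has length exactly
`q^{−1}` and `‖B̃‖ = q⁻¹`. -/
theorem tensor_basis_gramSchmidt (q n' k : ℕ) [NeZero (n' * k)]
    (hq : 1 ≤ q) (hn' : 1 ≤ n') (hk : 1 ≤ k) :
    ({x : Fin (n' * k) → ℝ | ∃ z : Fin (n' * k) → ℤ,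
        x = (Bmat q n' k).mulVec (fun i => (z i : ℝ))}
      = {x : Fin (n' * k) → ℝ | ∃ (w : Fin n' → ℤ) (y : Fin (n' * k) → ℤ),
          x = fun i => (q : ℝ) ^ (-(k : ℤ)) * (((Gmat q n' k).mulVec w) i : ℝ) + (y i : ℝ)})
    ∧ (∀ j : Fin (n' * k),
        gramSchmidtFin (Bcols q n' k) j = (q : ℝ)⁻¹ • EuclideanSpace.single j (1 : ℝ))
    ∧ (∀ j : Fin (n' * k), ‖gramSchmidtFin (Bcols q n' k) j‖ = (q : ℝ)⁻¹) :=
  tensor_basis_gramSchmidt_general q n' k hq hk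

end
end

section
/- For every integer m ≥ 1, the set {0,1}^m ⊂ ℤ^m is of quality 2: for every z ∈ {0,1}^m there exists a unimodular matrix U ∈ ℤ^{m×m} such that the matrix U' ∈ ℤ^{m×(m−1)} obtained from U by removing its leftmost column has all of its columns orthogonal to z, and the largest singular value of U' is at most 2. -/
open Finset

private lemma sq_sum_of_card_le_one {α : Type*} (s : Finset α) (f : α → ℝ)
    (h : s.card ≤ 1) : (∑ k ∈ s, f k) ^ 2 = ∑ k ∈ s, f k ^ 2 := by
  rcases s.eq_empty_or_nonempty with rfl | ⟨a, ha⟩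
  · simp
  · have hs : s = {a} := by
      apply Finset.eq_singleton_iff_unique_mem.mpr
      exact ⟨ha, fun b hb => Finset.card_le_one.mp h b hb a ha⟩
    subst hs; simp

/-- **Claim 4.6.** For every `m ≥ 1`, the set `{0,1}^m ⊆ ℤ^m` is of quality `2`: for every
`z ∈ {0,1}^m` there is a unimodular matrix `U ∈ ℤ^{m×m}` such that all the columns of the
matrix `U'` obtained from `U` by removing its leftmost column are orthogonal to `z`, and
the largest singular value of `U'` (equivalently, its operator norm, expressed below by
`‖U'x‖² ≤ 2²·‖x‖²` for all `x` supported away from the first coordinate) is at most `2`. -/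
theorem binary_set_quality_two (m : ℕ) [NeZero m] (hm : 1 ≤ m)
    (z : Fin m → ℤ) (hz : ∀ i, z i = 0 ∨ z i = 1) :
    ∃ U : Matrix (Fin m) (Fin m) ℤ,
      (U.det = 1 ∨ U.det = -1) ∧
      (∀ j : Fin m, j ≠ 0 → ∑ i, z i * U i j = 0) ∧
      (∀ x : Fin m → ℝ, x 0 = 0 →
        ∑ i, ((U.map (Int.cast : ℤ → ℝ)).mulVec x i) ^ 2 ≤ 2 ^ 2 * ∑ i, (x i) ^ 2) := by
  classical
  set S : Finset (Fin m) := Finset.univ.filter (fun i => z i = 1) with hSdef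
  by_cases hS : S.Nonempty
  case neg =>
    -- z is identically 0; take the identity matrix
    have hz0 : ∀ i, z i = 0 := by
      intro i
      rcases hz i with h | h
      · exact h
      · exact absurd ⟨i, by simp [hSdef, h]⟩ hS
    refine ⟨1, Or.inl Matrix.det_one, ?_, ?_⟩
    · intro j _; simp [hz0]
    · intro x _
      have h1 : ((1 : Matrix (Fin m) (Fin m) ℤ).map (Int.cast : ℤ → ℝ)) = 1 :=
        Matrix.map_one _ (by simp) (by simp)
      rw [h1]
      simp only [Matrix.one_mulVec]
      nlinarith [Finset.sum_nonneg (fun i (_ : i ∈ Finset.univ) => sq_nonneg (x i))]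
  case pos =>
  set a : Fin m := S.min' hS with ha
  have haS : a ∈ S := S.min'_mem hS
  set T : Finset (Fin m) := S.erase a with hT
  -- predecessor function
  set p : Fin m → Fin m := fun k =>
    if h : (S.filter (· < k)).Nonempty then (S.filter (· < k)).max' h else k with hp
  have hpT : ∀ k ∈ T, p k ∈ S ∧ p k < k := by
    intro k hk
    have hkS : k ∈ S := Finset.mem_of_mem_erase hk
    have hak : a < k := lt_of_le_of_ne (S.min'_le k hkS) (Ne.symm (Finset.ne_of_mem_erase hk))
    have hne : (S.filter (· < k)).Nonempty := ⟨a, by simp [haS, hak]⟩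
    have := (S.filter (· < k)).max'_mem hne
    simp only [Finset.mem_filter] at this
    simpa [hp, hne] using this
  have hp_inj : ∀ k ∈ T, ∀ k' ∈ T, p k = p k' → k = k' := by
    intro k hk k' hk' hpe
    by_contra hne
    wlog hlt : k < k' generalizing k k'
    · exact this k' hk' k hk hpe.symm (Ne.symm hne) (lt_of_le_of_ne (not_lt.mp hlt) (Ne.symm hne))
    · have hkS : k ∈ S := Finset.mem_of_mem_erase hk
      have h1 : (S.filter (· < k')).Nonempty := ⟨k, by simp [hkS, hlt]⟩
      have h2 : k ≤ p k' := by
        have := (S.filter (· < k')).le_max' k (by simp [hkS, hlt])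
        simpa [hp, h1] using this
      exact absurd hpe (by have := (hpT k hk).2; omega)
  -- the triangular matrix V
  set V : Matrix (Fin m) (Fin m) ℤ := fun i j =>
    (if i = j then 1 else 0) - (if j ∈ T ∧ i = p j then 1 else 0) with hV
  have hVdiag : ∀ i, V i i = 1 := by
    intro i
    have : ¬ (i ∈ T ∧ i = p i) := by
      rintro ⟨hiT, hip⟩
      exact absurd ((hpT i hiT).2) (by omega)
    simp [hV, this]
  have hVtri : V.BlockTriangular id := by
    intro i j hij
    simp only [id] at hij
    have h1 : i ≠ j := ne_of_gt hij
    have h2 : ¬ (j ∈ T ∧ i = p j) := by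
      rintro ⟨hjT, hip⟩
      have := (hpT j hjT).2
      omega
    simp [hV, h1, h2]
  have hVdet : V.det = 1 := by
    rw [Matrix.det_of_upperTriangular hVtri]
    simp [hVdiag]
  set σ : Equiv.Perm (Fin m) := Equiv.swap (0 : Fin m) a with hσ
  refine ⟨V.submatrix id σ, ?_, ?_, ?_⟩
  · rw [Matrix.det_permute' σ V, hVdet, mul_one]
    rcases Int.units_eq_one_or (Equiv.Perm.sign σ) with h | h <;> simp [h]
  · -- orthogonality
    intro j hj
    have hk : σ j ≠ a := by
      simp only [hσ]
      intro hc
      exact hj (by simpa using congrArg (Equiv.swap (0 : Fin m) a) hc)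
    set k := σ j with hkdef
    have hsum : ∑ i, z i * V i k =
        z k - (if k ∈ T then z (p k) else 0) := by
      simp only [hV, mul_sub, Finset.sum_sub_distrib, mul_ite, mul_one, mul_zero]
      congr 1
      · simp [eq_comm]
      · by_cases hkT : k ∈ T
        · simp [hkT]
        · simp [hkT]
    simp only [Matrix.submatrix_apply, id]
    rw [hsum]
    by_cases hkS : k ∈ S
    · have hkT : k ∈ T := Finset.mem_erase.mpr ⟨hk, hkS⟩
      have h1 : z k = 1 := by simpa [hSdef] using hkS
      have h2 : z (p k) = 1 := by
        have := (hpT k hkT).1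
        simpa [hSdef] using this
      simp [hkT, h1, h2]
    · have h1 : z k = 0 := by
        rcases hz k with h | h
        · exact h
        · exact absurd (by simp [hSdef, h]) hkS
      have hkT : k ∉ T := fun hc => hkS (Finset.mem_of_mem_erase hc)
      simp [hkT, h1]
  · -- norm bound
    intro x hx
    set y : Fin m → ℝ := fun k => x (σ k) with hy
    have hmv : ∀ i, ((V.submatrix id σ).map (Int.cast : ℤ → ℝ)).mulVec x i =
        y i - ∑ k, (if k ∈ T ∧ i = p k then y k else 0) := by
      intro i
      have hre : ∀ j : Fin m, ((V i (σ j) : ℤ) : ℝ) * x j =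
          (fun k => ((V i k : ℤ) : ℝ) * y k) (σ j) := by
        intro j
        have hs : σ (σ j) = j := by rw [hσ]; exact Equiv.swap_apply_self _ _ _
        simp only [hy, hs]
      calc ((V.submatrix id σ).map (Int.cast : ℤ → ℝ)).mulVec x i
          = ∑ j, ((V i (σ j) : ℤ) : ℝ) * x j := by
            simp [Matrix.mulVec, Matrix.map_apply, dotProduct]
        _ = ∑ k, ((V i k : ℤ) : ℝ) * y k := by
            rw [← Equiv.sum_comp σ (fun k => ((V i k : ℤ) : ℝ) * y k)]
            exact Finset.sum_congr rfl fun j _ => hre j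
        _ = y i - ∑ k, (if k ∈ T ∧ i = p k then y k else 0) := by
            simp only [hV]
            push_cast
            simp only [sub_mul, Finset.sum_sub_distrib, ite_mul, one_mul, zero_mul]
            congr 1
            simp [eq_comm]
    set w : Fin m → ℝ := fun i => ∑ k, (if k ∈ T ∧ i = p k then y k else 0) with hw
    have hwF : ∀ i, w i = ∑ k ∈ T.filter (fun k => p k = i), y k := by
      intro i
      show (∑ k : Fin m, if k ∈ T ∧ i = p k then y k else 0) = _
      rw [← Finset.sum_filter]
      congr 1
      ext k
      simp only [Finset.mem_filter, Finset.mem_univ, true_and]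
      constructor
      · rintro ⟨h1, h2⟩; exact ⟨h1, h2.symm⟩
      · rintro ⟨h1, h2⟩; exact ⟨h1, h2.symm⟩
    have hcard : ∀ i, (T.filter (fun k => p k = i)).card ≤ 1 := by
      intro i
      rw [Finset.card_le_one]
      intro k hk k' hk'
      simp only [Finset.mem_filter] at hk hk'
      exact hp_inj k hk.1 k' hk'.1 (hk.2.trans hk'.2.symm)
    have hwsq : ∑ i, w i ^ 2 ≤ ∑ i, y i ^ 2 := by
      calc ∑ i, w i ^ 2 = ∑ i, ∑ k ∈ T.filter (fun k => p k = i), y k ^ 2 := by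
            refine Finset.sum_congr rfl fun i _ => ?_
            rw [hwF i, sq_sum_of_card_le_one _ _ (hcard i)]
        _ = ∑ k ∈ T, y k ^ 2 :=
            Finset.sum_fiberwise_of_maps_to (fun k _ => Finset.mem_univ (p k)) _
        _ ≤ ∑ k, y k ^ 2 :=
            Finset.sum_le_sum_of_subset_of_nonneg (Finset.subset_univ T)
              (fun k _ _ => sq_nonneg (y k))
    have hysq : ∑ i, y i ^ 2 = ∑ i, x i ^ 2 := Equiv.sum_comp σ (fun i => x i ^ 2)
    calc ∑ i, ((V.submatrix id σ).map (Int.cast : ℤ → ℝ)).mulVec x i ^ 2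
        = ∑ i, (y i - w i) ^ 2 := Finset.sum_congr rfl fun i _ => by rw [hmv i]
      _ ≤ ∑ i, (2 * y i ^ 2 + 2 * w i ^ 2) :=
          Finset.sum_le_sum fun i _ => by nlinarith [sq_nonneg (y i + w i)]
      _ = 2 * ∑ i, y i ^ 2 + 2 * ∑ i, w i ^ 2 := by
          rw [Finset.sum_add_distrib, Finset.mul_sum, Finset.mul_sum]
      _ ≤ 2 ^ 2 * ∑ i, x i ^ 2 := by
          rw [hysq] at hwsq ⊢
          nlinarith [hwsq]
end

section
/- For every real r > 0 and every c ∈ [0,1), letting Z₀ = ∫_c^∞ exp(−πx²/r²) dx, Z₁ = ∫_{−∞}^{c−1} exp(−πx²/r²) dx, and ρ_r(ℤ+c) = ∑_{k∈ℤ} exp(−π(k+c)²/r²), one has Z₀ + Z₁ + exp(−πc²/r²) + exp(−π(c−1)²/r²) ≤ 2·ρ_r(ℤ+c). (Consequently, one iteration of the one-dimensional rejection sampler for the discrete Gaussian on ℤ+c outputs a value with probability at least 1/2.) -/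
open Real MeasureTheory

private lemma gauss_summable {b : ℝ} (hb : 0 < b) {c : ℝ} (hc : 0 ≤ c) :
    Summable fun n : ℕ => exp (-b * (c + n) ^ 2) := by
  refine Summable.of_nonneg_of_le (fun n => (exp_pos _).le) (fun n => ?_)
    (summable_geometric_of_lt_one (exp_pos (-b)).le (exp_lt_one_iff.2 (by linarith)))
  · rw [← exp_nat_mul]
    apply exp_le_exp.2
    have h1 : (n : ℝ) ≤ (n : ℝ) ^ 2 := by exact_mod_cast Nat.le_self_pow two_ne_zero n
    have h2 : (n : ℝ) ^ 2 ≤ (c + n) ^ 2 := by nlinarith [Nat.cast_nonneg (α := ℝ) n]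
    nlinarith

private lemma gauss_integral_le_sum {b : ℝ} (hb : 0 < b) {c : ℝ} (hc : 0 ≤ c) :
    (∫ x in Set.Ici c, exp (-b * x ^ 2)) ≤ ∑' n : ℕ, exp (-b * (c + n) ^ 2) := by
  have hS := gauss_summable hb hc
  have hint : IntegrableOn (fun x => exp (-b * x ^ 2)) (Set.Ioi c) :=
    (integrable_exp_neg_mul_sq hb).integrableOn
  rw [MeasureTheory.integral_Ici_eq_integral_Ioi]
  have htend := intervalIntegral_tendsto_integral_Ioi (μ := volume) c hint
    (Filter.tendsto_atTop_add_const_left Filter.atTop c (tendsto_natCast_atTop_atTop (R := ℝ)))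
  refine le_of_tendsto htend (Filter.Eventually.of_forall fun N => ?_)
  have hanti : AntitoneOn (fun x => exp (-b * x ^ 2)) (Set.Icc c (c + N)) := by
    intro x hx y hy hxy
    apply exp_le_exp.2
    have hx0 : 0 ≤ x := le_trans hc hx.1
    nlinarith [mul_le_mul hxy hxy hx0 (hx0.trans hxy)]
  calc (∫ x in c..c + N, exp (-b * x ^ 2))
      ≤ ∑ i ∈ Finset.range N, exp (-b * (c + i) ^ 2) := hanti.integral_le_sum
    _ ≤ ∑' n : ℕ, exp (-b * (c + n) ^ 2) :=
        Summable.sum_le_tsum _ (fun i _ => (exp_pos _).le) hS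

open Real in
/-- **Section 5.1.** For every `r > 0` and `c ∈ [0,1)`, with
`Z₀ = ∫_c^∞ exp(−πx²/r²) dx`, `Z₁ = ∫_{−∞}^{c−1} exp(−πx²/r²) dx` and
`ρ_r(ℤ+c) = ∑_{k∈ℤ} exp(−π(k+c)²/r²)`, one has
`Z₀ + Z₁ + exp(−πc²/r²) + exp(−π(c−1)²/r²) ≤ 2·ρ_r(ℤ+c)`.
Consequently, one iteration of the one-dimensional rejection sampler for the discrete
Gaussian on `ℤ+c` produces an output with probability at least `1/2`. -/
theorem rejection_sampler_success_prob (r c : ℝ) (hr : 0 < r) (hc0 : 0 ≤ c) (hc1 : c < 1) :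
    (∫ x in Set.Ici c, exp (-π * x ^ 2 / r ^ 2))
        + (∫ x in Set.Iic (c - 1), exp (-π * x ^ 2 / r ^ 2))
        + exp (-π * c ^ 2 / r ^ 2) + exp (-π * (c - 1) ^ 2 / r ^ 2)
      ≤ 2 * ∑' k : ℤ, exp (-π * ((k : ℝ) + c) ^ 2 / r ^ 2) := by
  set b : ℝ := π / r ^ 2 with hbdef
  have hb : 0 < b := div_pos pi_pos (by positivity)
  have hrw : ∀ x : ℝ, -π * x ^ 2 / r ^ 2 = -b * x ^ 2 := by
    intro x; rw [hbdef]; field_simp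
  simp only [hrw]
  have hc1' : 0 ≤ 1 - c := by linarith
  -- summability
  have hSp := gauss_summable hb hc0
  have hSm := gauss_summable hb hc1'
  -- split the ℤ-tsum
  have hsplit : (∑' k : ℤ, exp (-b * ((k : ℝ) + c) ^ 2))
      = (∑' n : ℕ, exp (-b * (c + n) ^ 2)) + ∑' n : ℕ, exp (-b * ((1 - c) + n) ^ 2) := by
    rw [tsum_of_nat_of_neg_add_one (f := fun k : ℤ => exp (-b * ((k : ℝ) + c) ^ 2))]
    · congr 1
      · exact tsum_congr fun n => by push_cast; ring_nf
      · exact tsum_congr fun n => by push_cast; ring_nf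
    · exact hSp.congr fun n => by push_cast; ring_nf
    · exact hSm.congr fun n => by push_cast; ring_nf
  -- bound the right integral
  have hIp := gauss_integral_le_sum hb hc0
  -- bound the left integral via symmetry
  have hIm : (∫ x in Set.Iic (c - 1), exp (-b * x ^ 2))
      ≤ ∑' n : ℕ, exp (-b * ((1 - c) + n) ^ 2) := by
    have heq : (∫ x in Set.Iic (c - 1), exp (-b * x ^ 2))
        = ∫ x in Set.Ici (1 - c), exp (-b * x ^ 2) := by
      rw [MeasureTheory.integral_Ici_eq_integral_Ioi,
        show (1 - c) = -(c - 1) by ring,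
        ← integral_comp_neg_Iic (c - 1) (fun x => exp (-b * x ^ 2))]
      apply setIntegral_congr_fun measurableSet_Iic
      intro x _; ring_nf
    rw [heq]
    exact gauss_integral_le_sum hb hc1'
  -- single terms are bounded by the sums
  have hTp : exp (-b * c ^ 2) ≤ ∑' n : ℕ, exp (-b * (c + n) ^ 2) := by
    have := Summable.le_tsum hSp 0 fun i _ => (exp_pos _).le
    simpa using this
  have hTm : exp (-b * (c - 1) ^ 2) ≤ ∑' n : ℕ, exp (-b * ((1 - c) + n) ^ 2) := by
    have := Summable.le_tsum hSm 0 fun i _ => (exp_pos _).le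
    have h : exp (-b * (c - 1) ^ 2) = exp (-b * ((1 - c) + (0 : ℕ)) ^ 2) := by
      push_cast; ring_nf
    rw [h]; simpa using this
  rw [hsplit]
  linarith
end
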